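/- Let m ≥ 2, let a₁ < a₂ < ⋯ < a_m be points of [0,1], let α₁, …, α_m > 0 with Σ_{i=1}^m α_i = 1, and let λ = Σ_{i=1}^m α_i·δ_{a_i}. If p > 1/2, then the iterates V^n λ converge in total variation to δ_{a₁} as n → ∞; if p < 1/2, then V^n λ converge in total variation to δ_{a_m}. -/

import Mathlib

open MeasureTheory Set Filter Topology ENNReal

/-- The unit interval `[0,1]` as a measurable space (with the Borel σ-algebra). -/
abbrev UnitInt : Type := ↥(Set.Icc (0:ℝ) 1)

/-- The family of measures `P(x,y,·)`: `p·δ_x + q·δ_y` if `x < y`, `δ_x` if `x = y`,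
and `p·δ_y + q·δ_x` if `x > y`. -/
noncomputable def Pker (p q : ℝ) (x y : UnitInt) : Measure UnitInt :=
  if x < y then ENNReal.ofReal p • Measure.dirac x + ENNReal.ofReal q • Measure.dirac y
  else if y < x then ENNReal.ofReal p • Measure.dirac y + ENNReal.ofReal q • Measure.dirac x
  else Measure.dirac x

/-- Total variation distance between two measures:
`sup { |μ A − ν A| : A measurable }` (computed in `ℝ≥0∞`). -/
noncomputable def tvDist {X : Type*} [MeasurableSpace X] (μ ν : Measure X) : ℝ≥0∞ :=
  ⨆ (A : Set X) (_ : MeasurableSet A), (μ A - ν A) ⊔ (ν A - μ A)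

/-!
Let `b` be the leftmost atom of `λ` if `p > 1/2` and the rightmost one if `p < 1/2`, and let
`r = max p q > 1/2`. Since `P(x, y, ·)` lives on `{x, y}`, every iterate `Vⁿλ` stays on the
side of `b` where `λ` lives, and there `b` wins every encounter with probability `r`. Hence the
mass `t` of `b` evolves by `t ↦ t² + 2rt(1 - t)`, and `1 - (t² + 2rt(1 - t)) =
(1 - t)(1 - (2r - 1)t)` makes the missing mass decay geometrically, at rate
`1 - (2r - 1)λ{b} < 1`. Finally `tvDist μ δ_b ≤ 1 - μ{b}` for a probability measure `μ`.
-/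

section Pker

variable {p q : ℝ} {x y : UnitInt}

lemma Pker_apply_univ (hp : 0 ≤ p) (hq : 0 ≤ q) (hpq : p + q = 1) (x y : UnitInt) :
    Pker p q x y univ = 1 := by
  have h : ENNReal.ofReal p + ENNReal.ofReal q = 1 := by
    rw [← ENNReal.ofReal_add hp hq, hpq, ENNReal.ofReal_one]
  unfold Pker
  split_ifs <;> simp [h, add_comm]

lemma Pker_apply_of_notMem {A : Set UnitInt} (hx : x ∉ A) (hy : y ∉ A) :
    Pker p q x y A = 0 := by
  unfold Pker
  split_ifs <;> simp [Measure.dirac_apply, hx, hy]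

lemma Pker_apply_self : Pker p q x x {x} = 1 := by
  simp [Pker]

lemma Pker_singleton_of_lt (h : x < y) :
    Pker p q x y {x} = ENNReal.ofReal p ∧ Pker p q y x {x} = ENNReal.ofReal p := by
  simp [Pker, h, h.ne', not_lt_of_gt h]

lemma Pker_singleton_of_gt (h : y < x) :
    Pker p q x y {x} = ENNReal.ofReal q ∧ Pker p q y x {x} = ENNReal.ofReal q := by
  simp [Pker, h, h.ne, not_lt_of_gt h]

end Pker

lemma lintegral_eq_of_ae_mem_insert {X : Type*} [MeasurableSpace X] [MeasurableSingletonClass X]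
    {μ : Measure X} {b : X} {T : Set X} (hT : MeasurableSet T) (hb : b ∉ T)
    (hμ : ∀ᵐ x ∂μ, x ∈ insert b T) {f : X → ℝ≥0∞} {c d : ℝ≥0∞}
    (hfb : f b = c) (hfT : ∀ x ∈ T, f x = d) :
    ∫⁻ x, f x ∂μ = c * μ {b} + d * μ T := by
  have hf : f =ᵐ[μ] fun x =>
      ({b} : Set X).indicator (fun _ => c) x + T.indicator (fun _ => d) x := by
    filter_upwards [hμ] with x hx
    rcases hx with rfl | hx
    · simp [hfb, hb]
    · simp [hfT x hx, hx, ne_of_mem_of_not_mem hx hb]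
  rw [lintegral_congr_ae hf,
    lintegral_add_left (measurable_const.indicator (measurableSet_singleton b)),
    lintegral_indicator_const (measurableSet_singleton b), lintegral_indicator_const hT]

lemma tvDist_dirac_le {X : Type*} [MeasurableSpace X] [MeasurableSingletonClass X]
    (μ : Measure X) [IsProbabilityMeasure μ] (b : X) :
    tvDist μ (Measure.dirac b) ≤ 1 - μ {b} := by
  refine iSup₂_le fun A hA => ?_
  rw [Measure.dirac_apply' _ hA]
  by_cases hbA : b ∈ A
  · simp only [indicator_of_mem hbA, Pi.one_apply, tsub_eq_zero_of_le prob_le_one, zero_max]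
    exact tsub_le_tsub_left (measure_mono (singleton_subset_iff.2 hbA)) 1
  · simp only [indicator_of_notMem hbA, tsub_zero, zero_tsub, max_zero]
    rw [← prob_compl_eq_one_sub (measurableSet_singleton b)]
    exact measure_mono (subset_compl_singleton_iff.2 hbA)

/-- Both draws hit the extreme point (mass `t`), or exactly one does and it wins (probability
`r`). -/
def extremeMass (r t : ℝ) : ℝ := t * t + 2 * r * t * (1 - t)

lemma one_sub_iterate_extremeMass_le {r t : ℝ} (hr : 1 / 2 < r) (hr1 : r ≤ 1) (ht : 0 < t)
    (ht1 : t ≤ 1) (n : ℕ) :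
    t ≤ (extremeMass r)^[n] t ∧ (extremeMass r)^[n] t ≤ 1 ∧
      1 - (extremeMass r)^[n] t ≤ (1 - (2 * r - 1) * t) ^ n := by
  induction n with
  | zero => exact ⟨le_rfl, ht1, by simp [ht.le]⟩
  | succ n ih =>
    obtain ⟨hts, hs1, hgeom⟩ := ih
    set s := (extremeMass r)^[n] t
    rw [Function.iterate_succ_apply', extremeMass, pow_succ]
    have hc : 0 ≤ 1 - (2 * r - 1) * t := by nlinarith
    refine ⟨?_, ?_, ?_⟩
    · nlinarith [mul_nonneg (mul_nonneg (by linarith : 0 ≤ s) (sub_nonneg.2 hs1))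
        (by linarith : (0 : ℝ) ≤ 2 * r - 1)]
    · nlinarith [mul_nonneg (sub_nonneg.2 hs1) (by nlinarith : 0 ≤ 1 - (2 * r - 1) * s)]
    · nlinarith [mul_le_mul hgeom (by nlinarith : 1 - (2 * r - 1) * s ≤ 1 - (2 * r - 1) * t)
        (by nlinarith) (pow_nonneg hc n)]

lemma tendsto_iterate_extremeMass {r t : ℝ} (hr : 1 / 2 < r) (hr1 : r ≤ 1) (ht : 0 < t)
    (ht1 : t ≤ 1) : Tendsto (fun n => (extremeMass r)^[n] t) atTop (𝓝 1) := by
  have hgeom : Tendsto (fun n => 1 - (1 - (2 * r - 1) * t) ^ n) atTop (𝓝 1) := by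
    have hc : 0 ≤ 1 - (2 * r - 1) * t := by nlinarith
    simpa using (_root_.tendsto_pow_atTop_nhds_zero_of_lt_one hc (by nlinarith)).const_sub 1
  refine tendsto_of_tendsto_of_tendsto_of_le_of_le hgeom tendsto_const_nhds (fun n => ?_)
    fun n => (one_sub_iterate_extremeMass_le hr hr1 ht ht1 n).2.1
  linarith [(one_sub_iterate_extremeMass_le hr hr1 ht ht1 n).2.2]

def IsLebesgueQSO (p q : ℝ) (V : Measure UnitInt → Measure UnitInt) : Prop :=
  ∀ (μ : Measure UnitInt) (A : Set UnitInt), MeasurableSet A →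
    V μ A = ∫⁻ x, ∫⁻ y, Pker p q x y A ∂μ ∂μ

namespace IsLebesgueQSO

variable {p q : ℝ} {V : Measure UnitInt → Measure UnitInt} (hV : IsLebesgueQSO p q V)
include hV

lemma isProbabilityMeasure (hp : 0 ≤ p) (hq : 0 ≤ q) (hpq : p + q = 1) (μ : Measure UnitInt)
    [IsProbabilityMeasure μ] : IsProbabilityMeasure (V μ) :=
  ⟨by simp [hV μ univ MeasurableSet.univ, Pker_apply_univ hp hq hpq]⟩

lemma ae_mem {μ : Measure UnitInt} {S : Set UnitInt} (hS : MeasurableSet S)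
    (hμ : ∀ᵐ x ∂μ, x ∈ S) : ∀ᵐ x ∂(V μ), x ∈ S := by
  rw [ae_iff, ← compl_def, hV μ _ hS.compl]
  refine lintegral_eq_zero_of_ae_eq_zero ?_
  filter_upwards [hμ] with x hx
  refine lintegral_eq_zero_of_ae_eq_zero ?_
  filter_upwards [hμ] with y hy
  exact Pker_apply_of_notMem (not_not.2 hx) (not_not.2 hy)

lemma isProbabilityMeasure_iterate (hp : 0 ≤ p) (hq : 0 ≤ q) (hpq : p + q = 1)
    (μ : Measure UnitInt) [IsProbabilityMeasure μ] (n : ℕ) : IsProbabilityMeasure (V^[n] μ) := by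
  induction n with
  | zero => assumption
  | succ n ih =>
    rw [Function.iterate_succ_apply']
    exact hV.isProbabilityMeasure hp hq hpq _

lemma ae_mem_iterate {μ : Measure UnitInt} {S : Set UnitInt} (hS : MeasurableSet S)
    (hμ : ∀ᵐ x ∂μ, x ∈ S) (n : ℕ) : ∀ᵐ x ∂(V^[n] μ), x ∈ S := by
  induction n with
  | zero => exact hμ
  | succ n ih =>
    rw [Function.iterate_succ_apply']
    exact hV.ae_mem hS ih

section ExtremePoint

variable {b : UnitInt} {T : Set UnitInt} {r : ℝ} (hT : MeasurableSet T) (hbT : b ∉ T)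
  (hwin : ∀ y ∈ T, Pker p q b y {b} = ENNReal.ofReal r ∧ Pker p q y b {b} = ENNReal.ofReal r)
include hT hbT hwin

lemma apply_singleton {μ : Measure UnitInt} (hμ : ∀ᵐ x ∂μ, x ∈ insert b T) :
    V μ {b} = (μ {b} + ENNReal.ofReal r * μ T) * μ {b} + ENNReal.ofReal r * μ {b} * μ T := by
  rw [hV μ _ (measurableSet_singleton b)]
  refine lintegral_eq_of_ae_mem_insert hT hbT hμ ?_ fun x hx => ?_
  · rw [lintegral_eq_of_ae_mem_insert hT hbT hμ Pker_apply_self fun y hy => (hwin y hy).1,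
      one_mul]
  · have hxb : x ∉ ({b} : Set UnitInt) := ne_of_mem_of_not_mem hx hbT
    rw [lintegral_eq_of_ae_mem_insert hT hbT hμ (hwin x hx).2
      fun y hy => Pker_apply_of_notMem hxb (ne_of_mem_of_not_mem hy hbT), zero_mul, add_zero]

lemma toReal_apply_singleton (hr : 0 ≤ r) {μ : Measure UnitInt} [IsProbabilityMeasure μ]
    (hμ : ∀ᵐ x ∂μ, x ∈ insert b T) :
    (V μ {b}).toReal = extremeMass r (μ {b}).toReal := by
  have hsplit : (μ {b}).toReal + (μ T).toReal = 1 := by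
    rw [← measureReal_def, ← measureReal_def, ← measureReal_union
      (disjoint_singleton_left.2 hbT) hT, ← insert_eq, measureReal_def,
      (ae_mem_iff_measure_eq (hT.insert b).nullMeasurableSet).1 hμ, measure_univ,
      ENNReal.toReal_one]
  rw [hV.apply_singleton hT hbT hwin hμ, ENNReal.toReal_add (by finiteness) (by finiteness),
    ENNReal.toReal_mul, ENNReal.toReal_add (by finiteness) (by finiteness)]
  simp only [ENNReal.toReal_mul, ENNReal.toReal_ofReal hr, extremeMass]
  linear_combination 2 * r * (μ {b}).toReal * hsplit

lemma toReal_iterate_apply_singleton (hp : 0 ≤ p) (hq : 0 ≤ q) (hpq : p + q = 1) (hr : 0 ≤ r)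
    (μ : Measure UnitInt) [IsProbabilityMeasure μ] (hμ : ∀ᵐ x ∂μ, x ∈ insert b T) (n : ℕ) :
    (V^[n] μ {b}).toReal = (extremeMass r)^[n] (μ {b}).toReal := by
  induction n with
  | zero => rfl
  | succ n ih =>
    have := hV.isProbabilityMeasure_iterate hp hq hpq μ n
    rw [Function.iterate_succ_apply', Function.iterate_succ_apply', ← ih,
      hV.toReal_apply_singleton hT hbT hwin hr (hV.ae_mem_iterate (hT.insert b) hμ n)]

theorem tendsto_tvDist_iterate_dirac (hp : 0 ≤ p) (hq : 0 ≤ q) (hpq : p + q = 1)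
    (hr : 1 / 2 < r) (hr1 : r ≤ 1) (μ : Measure UnitInt) [IsProbabilityMeasure μ]
    (hμ : ∀ᵐ x ∂μ, x ∈ insert b T) (hμb : 0 < μ {b}) :
    Tendsto (fun n => tvDist (V^[n] μ) (Measure.dirac b)) atTop (𝓝 0) := by
  have hmass : Tendsto (fun n => V^[n] μ {b}) atTop (𝓝 1) := by
    have hlim := ENNReal.tendsto_ofReal <| tendsto_iterate_extremeMass hr hr1
      (ENNReal.toReal_pos hμb.ne' (measure_ne_top μ {b})) measureReal_le_one
    simp only [← hV.toReal_iterate_apply_singleton hT hbT hwin hp hq hpq (by linarith) μ hμ,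
      ENNReal.ofReal_one] at hlim
    refine hlim.congr fun n => ?_
    have := hV.isProbabilityMeasure_iterate hp hq hpq μ n
    exact ENNReal.ofReal_toReal (measure_ne_top _ _)
  have hdefect : Tendsto (fun n => 1 - V^[n] μ {b}) atTop (𝓝 0) := by
    simpa using ENNReal.Tendsto.sub tendsto_const_nhds hmass (Or.inl one_ne_top)
  refine tendsto_of_tendsto_of_tendsto_of_le_of_le tendsto_const_nhds hdefect (fun _ => zero_le)
    fun n => ?_
  have := hV.isProbabilityMeasure_iterate hp hq hpq μ n
  exact tvDist_dirac_le _ b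

end ExtremePoint

end IsLebesgueQSO

section DiracCombination

variable {X ι : Type*} [MeasurableSpace X] [Fintype ι] (a : ι → X)

lemma isProbabilityMeasure_sum_dirac {α : ι → ℝ} (hα : ∀ i, 0 ≤ α i) (hsum : ∑ i, α i = 1) :
    IsProbabilityMeasure (∑ i, ENNReal.ofReal (α i) • Measure.dirac (a i)) :=
  ⟨by simp [← ENNReal.ofReal_sum_of_nonneg fun i _ => hα i, hsum]⟩

lemma ae_mem_sum_dirac {S : Set X} (hS : MeasurableSet S) (ha : ∀ i, a i ∈ S) (c : ι → ℝ≥0∞) :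
    ∀ᵐ x ∂(∑ i, c i • Measure.dirac (a i)), x ∈ S := by
  rw [ae_iff, ← compl_def]
  simp [Measure.dirac_apply' _ hS.compl, ha]

lemma le_sum_dirac_apply_singleton [MeasurableSingletonClass X] (c : ι → ℝ≥0∞) (j : ι) :
    c j ≤ (∑ i, c i • Measure.dirac (a i)) {a j} := by
  simpa using Finset.single_le_sum (f := fun i => c i * Measure.dirac (a i) {a j})
    (fun _ _ => zero_le) (Finset.mem_univ j)

end DiracCombination

theorem iterates_finite_support_tv_limit (p q : ℝ) (hp : 0 ≤ p) (hq : 0 ≤ q) (hpq : p + q = 1)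
    (V : Measure UnitInt → Measure UnitInt)
    (hV : ∀ (μ : Measure UnitInt) (A : Set UnitInt), MeasurableSet A →
      V μ A = ∫⁻ x, ∫⁻ y, Pker p q x y A ∂μ ∂μ)
    (m : ℕ) (hm : 2 ≤ m) (a : Fin m → UnitInt) (ha : StrictMono a)
    (α : Fin m → ℝ) (hα : ∀ i, 0 < α i) (hsum : ∑ i, α i = 1)
    (lam : Measure UnitInt)
    (hlam : lam = ∑ i, ENNReal.ofReal (α i) • Measure.dirac (a i)) :
    (p > 1/2 →
      Tendsto (fun n => tvDist (V^[n] lam) (Measure.dirac (a ⟨0, by omega⟩))) atTop (𝓝 0)) ∧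
    (p < 1/2 →
      Tendsto (fun n => tvDist (V^[n] lam) (Measure.dirac (a ⟨m - 1, by omega⟩))) atTop (𝓝 0)) := by
  have hQSO : IsLebesgueQSO p q V := hV
  subst hlam
  have := isProbabilityMeasure_sum_dirac a (fun i => (hα i).le) hsum
  have hmass (j : Fin m) := (ENNReal.ofReal_pos.2 (hα j)).trans_le
    (le_sum_dirac_apply_singleton a (fun i => ENNReal.ofReal (α i)) j)
  constructor
  · intro hp2
    refine hQSO.tendsto_tvDist_iterate_dirac measurableSet_Ioi self_notMem_Ioi
      (fun y hy => Pker_singleton_of_lt hy) hp hq hpq hp2 (by linarith) _ ?_ (hmass _)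
    rw [Ioi_insert]
    exact ae_mem_sum_dirac a measurableSet_Ici
      (fun i => ha.monotone (Fin.le_def.2 (Nat.zero_le _))) _
  · intro hp2
    refine hQSO.tendsto_tvDist_iterate_dirac measurableSet_Iio self_notMem_Iio
      (fun y hy => Pker_singleton_of_gt hy) hp hq hpq (by linarith) (by linarith) _ ?_
      (hmass _)
    rw [Iio_insert]
    exact ae_mem_sum_dirac a measurableSet_Iic
      (fun i => ha.monotone (Fin.le_def.2 (Nat.le_sub_one_of_lt i.2))) _
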